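/- arXiv:1802.08021 — 4 statements merged into one kernel-verified Lean document; each statement's English description precedes it below -/
import Mathlib

section
/- In the α-β cost model, the recursive doubling sparse allreduce over P = 2^m nodes (m ≥ 1) with per-node sparsity k has total cost T bounded by log₂(P)·α + log₂(P)·k·β_s ≤ T ≤ log₂(P)·α + (P-1)·k·β_s, where the lower bound corresponds to fully overlapping index sets (intermediate results of constant size k per stage) and the upper bound to fully disjoint sets (2^{t-1}·k items at stage t). -/
/-!
Each of the `log₂ P` stages pays the latency `α` once, and its bandwidth term `L t * βs` is
monotone in the message length. Bounding `L t` below by `k` and above by `2^(t-1) * k` therefore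
sandwiches `T` between the costs of the two extreme schedules, and the geometric sum
`∑_{t=1}^{m} 2^(t-1) = 2^m - 1 = P - 1` turns the disjoint schedule into the stated upper bound.
-/

open Finset

lemma sum_Icc_one_two_pow_pred (m : ℕ) : ∑ t ∈ Icc 1 m, (2 : ℝ) ^ (t - 1) = 2 ^ m - 1 := by
  rw [← Ico_add_one_right_eq_Icc, sum_Ico_eq_sum_range]
  norm_num [geom_sum_eq]

def stagedCost (α βs : ℝ) (L : ℕ → ℝ) (m : ℕ) : ℝ :=
  ∑ t ∈ Icc 1 m, (α + L t * βs)

section stagedCost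

variable {α βs : ℝ} {m : ℕ}

lemma stagedCost_mono {L L' : ℕ → ℝ} (hβ : 0 ≤ βs) (hL : ∀ t ∈ Icc 1 m, L t ≤ L' t) :
    stagedCost α βs L m ≤ stagedCost α βs L' m := by
  unfold stagedCost
  gcongr with t ht
  exact hL t ht

lemma stagedCost_const (k : ℝ) :
    stagedCost α βs (fun _ ↦ k) m = m * α + m * k * βs := by
  simp only [stagedCost, sum_const, Nat.card_Icc, add_tsub_cancel_right, nsmul_eq_mul]
  ring

lemma stagedCost_two_pow_pred (k : ℝ) :
    stagedCost α βs (fun t ↦ 2 ^ (t - 1) * k) m = m * α + (2 ^ m - 1) * k * βs := by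
  simp only [stagedCost, sum_add_distrib, sum_const, Nat.card_Icc, add_tsub_cancel_right,
    nsmul_eq_mul, ← sum_mul, sum_Icc_one_two_pow_pred]

end stagedCost

theorem recursive_doubling_cost_bounds_general (m P : ℕ)
    (hP : P = 2 ^ m) (k α βs : ℝ) (hβ : 0 < βs)
    (L : ℕ → ℝ)
    (hL : ∀ t ∈ Finset.Icc 1 m, k ≤ L t ∧ L t ≤ 2 ^ (t - 1) * k)
    (T : ℝ) (hT : T = ∑ t ∈ Finset.Icc 1 m, (α + L t * βs)) :
    (Nat.log2 P : ℝ) * α + (Nat.log2 P : ℝ) * k * βs ≤ T ∧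
      T ≤ (Nat.log2 P : ℝ) * α + ((P : ℝ) - 1) * k * βs := by
  obtain rfl : T = stagedCost α βs L m := hT
  subst hP
  rw [Nat.log2_two_pow, Nat.cast_pow, Nat.cast_ofNat, ← stagedCost_const,
    ← stagedCost_two_pow_pred]
  exact ⟨stagedCost_mono hβ.le fun t ht ↦ (hL t ht).1,
    stagedCost_mono hβ.le fun t ht ↦ (hL t ht).2⟩

/-- α-β cost of recursive doubling sparse allreduce over `P = 2^m` nodes:
if at stage `t ∈ {1, …, m}` each node transmits `L t` items with
`k ≤ L t ≤ 2^(t-1) * k` (fully overlapping vs. fully disjoint index sets),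
then the total cost `T = ∑_{t=1}^{m} (α + L t * βs)` satisfies
`log₂(P) * α + log₂(P) * k * βs ≤ T ≤ log₂(P) * α + (P - 1) * k * βs`. -/
theorem recursive_doubling_cost_bounds (m P : ℕ) (hm : 1 ≤ m)
    (hP : P = 2 ^ m) (k α βs : ℝ) (hk : 0 ≤ k) (hα : 0 < α) (hβ : 0 < βs)
    (L : ℕ → ℝ)
    (hL : ∀ t ∈ Finset.Icc 1 m, k ≤ L t ∧ L t ≤ 2 ^ (t - 1) * k)
    (T : ℝ) (hT : T = ∑ t ∈ Finset.Icc 1 m, (α + L t * βs)) :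
    (Nat.log2 P : ℝ) * α + (Nat.log2 P : ℝ) * k * βs ≤ T ∧
      T ≤ (Nat.log2 P : ℝ) * α + ((P : ℝ) - 1) * k * βs :=
  recursive_doubling_cost_bounds_general m P hP k α βs hβ L hL T hT
end

section
/- Let x_0, x_1, ..., x_T be a sequence in ℝⁿ and v_0, v_1, ..., v_T another sequence such that for some constants γ ∈ (0, 1/√2), ξ ≥ 0, P ≥ 1, and all t ≥ 1: ‖v_t - x_t‖² ≤ (1 + ξ/(Pγ))² · ∑_{k=1}^{t} (2γ²)^k · ‖x_{t-k+1} - x_{t-k}‖². If additionally ‖x_{s+1} - x_s‖ ≤ α_s·M for all s with ∑_s α_s² < ∞, then ∑_{t=1}^∞ ‖v_t - x_t‖² ≤ (1 + ξ/(Pγ))² · (2γ²/(1-2γ²)) · M² · ∑_{s=0}^∞ α_s². -/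
/-!
Shifting the index, the hypothesis bounds the `t`-th error by a Cauchy product of the kernel
`k ↦ C r^(k+1)` (with `r = 2γ² < 1`) and the squared steps `s ↦ α_s² M²`. Both are nonnegative
and summable, so the errors are summable with sum at most the product of the two sums, namely
`C r/(1-r) · M² ∑ α_s²`.
-/

open Finset

theorem sum_Icc_one_succ_eq_sum_antidiagonal {M : Type*} [AddCommMonoid M] (f : ℕ → ℕ → M)
    (t : ℕ) :
    ∑ k ∈ Icc 1 (t + 1), f k (t + 1 - k) = ∑ p ∈ antidiagonal t, f (p.1 + 1) p.2 := by
  rw [Nat.sum_antidiagonal_eq_sum_range_succ_mk, ← Ico_add_one_right_eq_Icc,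
    sum_Ico_eq_sum_range, Nat.add_sub_cancel]
  refine sum_congr rfl fun k _ => ?_
  rw [add_comm 1 k, Nat.add_sub_add_right]

theorem tsum_le_tsum_mul_tsum_of_le_sum_antidiagonal {e a d : ℕ → ℝ} (he : ∀ t, 0 ≤ e t)
    (ha : ∀ i, 0 ≤ a i) (hd : ∀ j, 0 ≤ d j) (ha_sum : Summable a) (hd_sum : Summable d)
    (hle : ∀ t, e t ≤ ∑ p ∈ antidiagonal t, a p.1 * d p.2) :
    ∑' t, e t ≤ (∑' i, a i) * ∑' j, d j := by
  have ha_norm : Summable fun i => ‖a i‖ := by simpa [Real.norm_of_nonneg (ha _)] using ha_sum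
  have hd_norm : Summable fun j => ‖d j‖ := by simpa [Real.norm_of_nonneg (hd _)] using hd_sum
  rw [tsum_mul_tsum_eq_tsum_sum_antidiagonal_of_summable_norm ha_norm hd_norm]
  have hconv := (summable_norm_sum_mul_antidiagonal_of_summable_norm ha_norm hd_norm).of_norm
  exact (hconv.of_nonneg_of_le he hle).tsum_le_tsum hle hconv

theorem tsum_pow_succ_of_lt_one {r : ℝ} (h₀ : 0 ≤ r) (h₁ : r < 1) :
    ∑' k : ℕ, r ^ (k + 1) = r / (1 - r) := by
  simp_rw [pow_succ', tsum_mul_left, tsum_geometric_of_lt_one h₀ h₁, div_eq_mul_inv]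

theorem two_mul_sq_lt_one {γ : ℝ} (h₀ : 0 ≤ γ) (h₁ : γ < 1 / Real.sqrt 2) : 2 * γ ^ 2 < 1 := by
  have h := pow_lt_pow_left₀ h₁ h₀ two_ne_zero
  rw [div_pow, one_pow, Real.sq_sqrt zero_le_two] at h
  linarith

theorem accumulated_error_bound_general {n : ℕ}
    (x v : ℕ → EuclideanSpace ℝ (Fin n)) (γ ξ P M : ℝ) (α : ℕ → ℝ)
    (hγ0 : 0 < γ) (hγ1 : γ < 1 / Real.sqrt 2)
    (hα2 : Summable fun s => (α s) ^ 2)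
    (hbound : ∀ t : ℕ, 1 ≤ t →
      ‖v t - x t‖ ^ 2 ≤ (1 + ξ / (P * γ)) ^ 2 *
        ∑ k ∈ Finset.Icc 1 t, (2 * γ ^ 2) ^ k * ‖x (t - k + 1) - x (t - k)‖ ^ 2)
    (hstep : ∀ s : ℕ, ‖x (s + 1) - x s‖ ≤ α s * M) :
    ∑' t : ℕ, ‖v (t + 1) - x (t + 1)‖ ^ 2
      ≤ (1 + ξ / (P * γ)) ^ 2 * (2 * γ ^ 2 / (1 - 2 * γ ^ 2)) * M ^ 2 *
          ∑' s : ℕ, (α s) ^ 2 := by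
  set C := (1 + ξ / (P * γ)) ^ 2
  set r := 2 * γ ^ 2
  have hr : r < 1 := two_mul_sq_lt_one hγ0.le hγ1
  have hconv : ∀ t, ‖v (t + 1) - x (t + 1)‖ ^ 2 ≤
      ∑ p ∈ antidiagonal t, C * r ^ (p.1 + 1) * (α p.2 ^ 2 * M ^ 2) := by
    intro t
    refine (hbound (t + 1) t.succ_pos).trans ?_
    rw [sum_Icc_one_succ_eq_sum_antidiagonal (fun k s => r ^ k * ‖x (s + 1) - x s‖ ^ 2),
      mul_sum]
    refine sum_le_sum fun p _ => ?_
    rw [mul_assoc, ← mul_pow]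
    gcongr
    exact hstep p.2
  have hkernel : Summable fun k : ℕ => C * r ^ (k + 1) :=
    (summable_geometric_of_lt_one (by positivity) hr).mul_left (C * r) |>.congr fun k => by ring
  calc ∑' t, ‖v (t + 1) - x (t + 1)‖ ^ 2
      ≤ (∑' k, C * r ^ (k + 1)) * ∑' s, α s ^ 2 * M ^ 2 :=
        tsum_le_tsum_mul_tsum_of_le_sum_antidiagonal (fun _ => by positivity)
          (fun _ => by positivity) (fun _ => by positivity) hkernel (hα2.mul_right _) hconv
    _ = C * (r / (1 - r)) * M ^ 2 * ∑' s, α s ^ 2 := by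
        rw [tsum_mul_left, tsum_pow_succ_of_lt_one (by positivity) hr, tsum_mul_right]
        ring

/-- Accumulated error bound for Quantized TopK SGD: if for all `t ≥ 1`
`‖v_t - x_t‖² ≤ (1 + ξ/(Pγ))² ∑_{k=1}^{t} (2γ²)^k ‖x_{t-k+1} - x_{t-k}‖²`,
and `‖x_{s+1} - x_s‖ ≤ α_s M` with square-summable `α`, then
`∑_{t=1}^∞ ‖v_t - x_t‖² ≤ (1 + ξ/(Pγ))² (2γ²/(1-2γ²)) M² ∑_s α_s²`. -/
theorem accumulated_error_bound {n : ℕ}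
    (x v : ℕ → EuclideanSpace ℝ (Fin n)) (γ ξ P M : ℝ) (α : ℕ → ℝ)
    (hγ0 : 0 < γ) (hγ1 : γ < 1 / Real.sqrt 2) (hξ : 0 ≤ ξ) (hP : 1 ≤ P)
    (hM : 0 ≤ M) (hα : ∀ s, 0 ≤ α s) (hα2 : Summable fun s => (α s) ^ 2)
    (hbound : ∀ t : ℕ, 1 ≤ t →
      ‖v t - x t‖ ^ 2 ≤ (1 + ξ / (P * γ)) ^ 2 *
        ∑ k ∈ Finset.Icc 1 t, (2 * γ ^ 2) ^ k * ‖x (t - k + 1) - x (t - k)‖ ^ 2)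
    (hstep : ∀ s : ℕ, ‖x (s + 1) - x s‖ ≤ α s * M) :
    ∑' t : ℕ, ‖v (t + 1) - x (t + 1)‖ ^ 2
      ≤ (1 + ξ / (P * γ)) ^ 2 * (2 * γ ^ 2 / (1 - 2 * γ ^ 2)) * M ^ 2 *
          ∑' s : ℕ, (α s) ^ 2 :=
  accumulated_error_bound_general x v γ ξ P M α hγ0 hγ1 hα2 hbound hstep
end

section
/- If 0 < 2γ² < 1 and the learning rates are α_t = a/(t+1) for some a > 0, then there exists a constant D > 0 such that for all t ≥ 1, ∑_{k=1}^{t} (2γ²)^k · α_{t-k}²/α_t ≤ D. -/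
/-! With `q = 2γ²`, each term equals `q^k · a(t+1)/(t-k+1)²`, and `t + 1 ≤ (t-k+1)(k+1)` bounds it
by `a (k+1)² q^k`, independently of `t`. Since `q < 1` the series `∑ (k+1)² q^k` converges,
and `a` times its sum is the constant `D`. -/

lemma add_add_one_div_sq_le {x y : ℝ} (hx : 0 ≤ x) (hy : 0 ≤ y) :
    (x + y + 1) / (x + 1) ^ 2 ≤ (y + 1) ^ 2 := by
  have hprod : 1 ≤ (x + 1) * (y + 1) := one_le_mul_of_one_le_of_one_le (by linarith) (by linarith)
  rw [div_le_iff₀ (by positivity)]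
  calc x + y + 1 ≤ (x + 1) * (y + 1) := by nlinarith [mul_nonneg hx hy]
    _ ≤ ((x + 1) * (y + 1)) ^ 2 := by nlinarith
    _ = (y + 1) ^ 2 * (x + 1) ^ 2 := by ring

lemma summable_add_one_sq_mul_geometric {q : ℝ} (hq : ‖q‖ < 1) :
    Summable fun k : ℕ => ((k : ℝ) + 1) ^ 2 * q ^ k := by
  have h2 := summable_pow_mul_geometric_of_norm_lt_one 2 hq
  have h1 := summable_pow_mul_geometric_of_norm_lt_one 1 hq
  have h0 := summable_geometric_of_norm_lt_one hq
  exact (h2.add ((h1.mul_left 2).add h0)).congr fun k => by ring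

lemma sq_div_harmonic_rate_le {a : ℝ} (ha : 0 ≤ a) {t k : ℕ} (hk : k ≤ t) :
    (a / (((t - k : ℕ) : ℝ) + 1)) ^ 2 / (a / ((t : ℝ) + 1)) ≤ a * ((k : ℝ) + 1) ^ 2 := by
  obtain ⟨m, rfl⟩ := Nat.exists_eq_add_of_le hk
  have hratio : (a / ((m : ℝ) + 1)) ^ 2 / (a / (((k + m : ℕ) : ℝ) + 1))
      = a * ((m + k + 1) / ((m : ℝ) + 1) ^ 2) := by
    rcases ha.eq_or_lt with rfl | ha
    · simp
    · push_cast
      field_simp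
      ring
  rw [Nat.add_sub_cancel_left, hratio]
  gcongr
  exact add_add_one_div_sq_le m.cast_nonneg k.cast_nonneg

theorem learning_rate_condition_general (γ a : ℝ)
    (hγ1 : 2 * γ ^ 2 < 1) (ha : 0 < a) (α : ℕ → ℝ)
    (hα : ∀ t, α t = a / (t + 1)) :
    ∃ D : ℝ, 0 < D ∧ ∀ t : ℕ, 1 ≤ t →
      ∑ k ∈ Finset.Icc 1 t, (2 * γ ^ 2) ^ k * (α (t - k)) ^ 2 / α t ≤ D := by
  set q := 2 * γ ^ 2
  have hq : ‖q‖ < 1 := by rwa [Real.norm_of_nonneg (by positivity)]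
  have hsum := summable_add_one_sq_mul_geometric hq
  have hT : 0 < ∑' k : ℕ, ((k : ℝ) + 1) ^ 2 * q ^ k :=
    hsum.tsum_pos (fun k => by positivity) 0 (by simp)
  refine ⟨a * ∑' k : ℕ, ((k : ℝ) + 1) ^ 2 * q ^ k, mul_pos ha hT, fun t _ => ?_⟩
  calc ∑ k ∈ Finset.Icc 1 t, q ^ k * α (t - k) ^ 2 / α t
      ≤ ∑ k ∈ Finset.Icc 1 t, a * (((k : ℝ) + 1) ^ 2 * q ^ k) := by
        refine Finset.sum_le_sum fun k hk => ?_
        rw [mul_div_assoc, hα, hα, mul_comm, ← mul_assoc]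
        gcongr
        exact sq_div_harmonic_rate_le ha.le (Finset.mem_Icc.mp hk).2
    _ = a * ∑ k ∈ Finset.Icc 1 t, ((k : ℝ) + 1) ^ 2 * q ^ k := (Finset.mul_sum ..).symm
    _ ≤ a * ∑' k : ℕ, ((k : ℝ) + 1) ^ 2 * q ^ k := by
        gcongr
        exact hsum.sum_le_tsum _ fun k _ => by positivity

/-- The learning-rate condition of the non-convex convergence theorem holds
for `α_t = a/(t+1)`: if `0 < 2γ² < 1` and `a > 0`, there is a constant
`D > 0` with `∑_{k=1}^{t} (2γ²)^k * α_{t-k}² / α_t ≤ D` for all `t ≥ 1`. -/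
theorem learning_rate_condition (γ a : ℝ) (hγ0 : 0 < 2 * γ ^ 2)
    (hγ1 : 2 * γ ^ 2 < 1) (ha : 0 < a) (α : ℕ → ℝ)
    (hα : ∀ t, α t = a / (t + 1)) :
    ∃ D : ℝ, 0 < D ∧ ∀ t : ℕ, 1 ≤ t →
      ∑ k ∈ Finset.Icc 1 t, (2 * γ ^ 2) ^ k * (α (t - k)) ^ 2 / α t ≤ D :=
  learning_rate_condition_general γ a hγ1 ha α hα
end

section
/- For all v ∈ ℝⁿ and 1 ≤ K ≤ n, where TopK(v) keeps the K largest-magnitude entries of v and sets the others to zero, the TopK operator is a γ-contraction with γ² = 1 - K/n, i.e., ‖v - TopK(v)‖² ≤ (1 - K/n)·‖v‖². -/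
/-- The TopK operator is a contraction with `γ² = 1 - K/n`: if `w` keeps the
`K` entries of `v` of largest absolute value (given by a set `S` of `K`
coordinates each dominating in magnitude every discarded coordinate) and
zeroes out the rest, then `‖v - w‖² ≤ (1 - K/n) ‖v‖²`, for `1 ≤ K ≤ n`. -/
theorem topK_contraction {n : ℕ} (K : ℕ) (hK1 : 1 ≤ K) (hKn : K ≤ n)
    (v w : EuclideanSpace ℝ (Fin n)) (S : Finset (Fin n)) (hS : S.card = K)
    (hw : ∀ i, w i = if i ∈ S then v i else 0)
    (htop : ∀ i ∈ S, ∀ j ∉ S, |v j| ≤ |v i|) :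
    ‖v - w‖ ^ 2 ≤ (1 - (K : ℝ) / n) * ‖v‖ ^ 2 := by
  have hn : 0 < (n : ℝ) := by exact_mod_cast lt_of_lt_of_le hK1 hKn
  -- norms as sums of squares
  have hv2 : ‖v‖ ^ 2 = ∑ i, (v i) ^ 2 := by
    rw [EuclideanSpace.norm_eq, Real.sq_sqrt (by positivity)]
    simp [sq_abs]
  have hvw2 : ‖v - w‖ ^ 2 = ∑ i ∈ Sᶜ, (v i) ^ 2 := by
    rw [EuclideanSpace.norm_eq, Real.sq_sqrt (by positivity)]
    rw [← Finset.sum_filter_add_sum_filter_not Finset.univ (· ∈ S)]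
    have h1 : ∑ i ∈ Finset.univ.filter (· ∈ S), ‖(v - w) i‖ ^ 2 = 0 := by
      apply Finset.sum_eq_zero
      intro i hi
      simp only [Finset.mem_filter] at hi
      simp [hw i, hi.2]
    rw [h1, zero_add]
    have h2 : Finset.univ.filter (¬ · ∈ S) = Sᶜ := by
      ext i; simp
    rw [h2]
    apply Finset.sum_congr rfl
    intro i hi
    rw [Finset.mem_compl] at hi
    simp [hw i, hi, sq_abs]
  -- split the full sum
  have hsplit : ∑ i, (v i) ^ 2 = ∑ i ∈ S, (v i) ^ 2 + ∑ i ∈ Sᶜ, (v i) ^ 2 :=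
    (Finset.sum_add_sum_compl S _).symm
  set A := ∑ i ∈ S, (v i) ^ 2 with hA
  set B := ∑ i ∈ Sᶜ, (v i) ^ 2 with hB
  -- minimum over S
  obtain ⟨i₀, hi₀S, hmin⟩ := S.exists_min_image (fun i => (v i) ^ 2)
    (Finset.card_pos.mp (hS ▸ hK1))
  set m := (v i₀) ^ 2 with hm
  have hm0 : 0 ≤ m := sq_nonneg _
  have hBle : B ≤ ((n : ℝ) - K) * m := by
    have hcard : (Sᶜ).card = n - K := by
      simp [Finset.card_compl, hS]
    calc B ≤ ∑ _i ∈ Sᶜ, m := by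
            apply Finset.sum_le_sum
            intro j hj
            rw [Finset.mem_compl] at hj
            have := htop i₀ hi₀S j hj
            nlinarith [abs_nonneg (v j), sq_abs (v j), sq_abs (v i₀)]
      _ = ((Sᶜ).card : ℝ) * m := by rw [Finset.sum_const, nsmul_eq_mul]
      _ = ((n : ℝ) - K) * m := by
            rw [hcard]; push_cast [Nat.cast_sub hKn]; ring_nf
  have hAge : (K : ℝ) * m ≤ A := by
    calc (K : ℝ) * m = (S.card : ℝ) * m := by rw [hS]
      _ = ∑ _i ∈ S, m := by rw [Finset.sum_const, nsmul_eq_mul]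
      _ ≤ A := Finset.sum_le_sum fun i hi => hmin i hi
  have hKn' : (K : ℝ) ≤ n := by exact_mod_cast hKn
  have hK0 : (0 : ℝ) < K := by exact_mod_cast hK1
  rw [hv2, hvw2, hsplit]
  have key : (K : ℝ) * B ≤ ((n : ℝ) - K) * A := by
    nlinarith
  have hgoal : (n : ℝ) * B ≤ ((n : ℝ) - K) * (A + B) := by nlinarith
  rw [← sub_nonneg]
  have : (1 - (K : ℝ) / n) * (A + B) - B = (((n : ℝ) - K) * (A + B) - n * B) / n := by
    field_simp
  rw [this]
  apply div_nonneg _ (le_of_lt hn)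
  linarith
end
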